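/- Let G be a Δ-regular finite simple graph of order n with n < 2Δ. Then A_{Δ−2}(G) = n. -/

import Mathlib

/-!
In a `Δ`-regular graph, `k_S ≥ Δ - 2` means that every vertex of `S` has at most one neighbour
outside `S`, and `k_S = Δ - 2` forces some vertex to have exactly one, so `S̄ = V \ S` is nonempty
and `Δ ≤ |S|`. Double counting the edges between `S` and `S̄`, with `t = |S̄|`, gives
`t (Δ + 1 - t) ≤ |S| = n - t < 2Δ - t`, which for `1 ≤ t < Δ` forces `t = 1`. Conversely, for
`S = V \ {w}` every vertex of `S` has at least `Δ - 1 ≥ (|S| - 1) / 2` neighbours in `S`, so any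
two of them are adjacent or share a neighbour and `⟨S⟩` is connected; a neighbour of `w`
realises `k_S = Δ - 2`. Hence the exact `(Δ - 2)`-alliances are the `n` sets `V \ {w}`.
-/

open Polynomial Finset

/-- Number of neighbors of `v` inside the set `S` (denoted δ_S(v)). -/
def SimpleGraph.degIn {V : Type*} [Fintype V] [DecidableEq V]
    (G : SimpleGraph V) [DecidableRel G.Adj] (S : Finset V) (v : V) : ℕ :=
  (S.filter (fun u => G.Adj v u)).card

/-- Number of neighbors of `v` outside the set `S` (denoted δ_{S̄}(v)). -/
def SimpleGraph.degOut {V : Type*} [Fintype V] [DecidableEq V]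
    (G : SimpleGraph V) [DecidableRel G.Adj] (S : Finset V) (v : V) : ℕ :=
  (Sᶜ.filter (fun u => G.Adj v u)).card

/-- `S` is an exact defensive `k`-alliance in `G`: the induced subgraph `⟨S⟩` is connected
(in particular `S` is nonempty) and `k = k_S = min_{v ∈ S} (δ_S(v) - δ_{S̄}(v))`. -/
def SimpleGraph.IsExactAlliance {V : Type*} [Fintype V] [DecidableEq V]
    (G : SimpleGraph V) [DecidableRel G.Adj] (S : Finset V) (k : ℤ) : Prop :=
  (G.induce (S : Set V)).Connected ∧
    (∀ v ∈ S, k ≤ (G.degIn S v : ℤ) - (G.degOut S v : ℤ)) ∧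
    (∃ v ∈ S, (G.degIn S v : ℤ) - (G.degOut S v : ℤ) = k)

/-- `A_k(G)`: the number of exact defensive `k`-alliances in `G`. -/
noncomputable def SimpleGraph.allianceCoeff {V : Type*} [Fintype V] [DecidableEq V]
    (G : SimpleGraph V) [DecidableRel G.Adj] (k : ℤ) : ℕ :=
  Set.ncard {S : Finset V | G.IsExactAlliance S k}

/-- The alliance polynomial `A(G;x) = Σ_{k=-Δ}^{Δ} A_k(G) x^{n+k}`, where `n` is the order and
`Δ` the maximum degree of `G`, regarded as a real polynomial. -/
noncomputable def SimpleGraph.alliancePoly {V : Type*} [Fintype V] [DecidableEq V]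
    (G : SimpleGraph V) [DecidableRel G.Adj] : Polynomial ℝ :=
  ∑ k ∈ Finset.Icc (-(G.maxDegree : ℤ)) (G.maxDegree : ℤ),
    (G.allianceCoeff k : ℝ) • X ^ (((Fintype.card V : ℤ) + k).toNat)

namespace SimpleGraph

variable {V : Type*} [Fintype V] [DecidableEq V] (G : SimpleGraph V) [DecidableRel G.Adj]

theorem degIn_add_degOut (S : Finset V) (v : V) : G.degIn S v + G.degOut S v = G.degree v := by
  rw [degIn, degOut, ← card_union_of_disjoint (disjoint_filter_filter disjoint_compl_right),
    ← filter_union, union_compl, ← neighborFinset_eq_filter, card_neighborFinset_eq_degree]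

theorem degIn_lt_card {S : Finset V} {v : V} (hv : v ∈ S) : G.degIn S v < #S :=
  card_lt_card (filter_ssubset.2 ⟨v, hv, G.irrefl⟩)

theorem degOut_lt_card_compl {S : Finset V} {v : V} (hv : v ∉ S) : G.degOut S v < #Sᶜ :=
  card_lt_card (filter_ssubset.2 ⟨v, mem_compl.2 hv, G.irrefl⟩)

theorem degOut_le_card_compl (S : Finset V) (v : V) : G.degOut S v ≤ #Sᶜ :=
  card_filter_le _ _

theorem sum_degOut_eq_sum_compl_degIn (S : Finset V) :
    ∑ v ∈ S, G.degOut S v = ∑ w ∈ Sᶜ, G.degIn S w := by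
  simp only [degOut, degIn, card_filter]
  rw [sum_comm]
  exact sum_congr rfl fun w _ => sum_congr rfl fun v _ => by simp [G.adj_comm]

theorem exists_common_neighbor_of_card_lt {S : Finset V} {a b : V} (ha : a ∈ S) (hb : b ∈ S)
    (hab : a ≠ b) (hnadj : ¬G.Adj a b) (hcard : #S < G.degIn S a + G.degIn S b + 2) :
    ∃ c ∈ S, G.Adj a c ∧ G.Adj b c := by
  have hA : S.filter (fun u => G.Adj a u) ⊆ (S.erase a).erase b := fun c hc => by
    obtain ⟨hcS, hac⟩ := mem_filter.1 hc
    exact mem_erase.2 ⟨by rintro rfl; exact hnadj hac,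
      mem_erase.2 ⟨(G.ne_of_adj hac).symm, hcS⟩⟩
  have hB : S.filter (fun u => G.Adj b u) ⊆ (S.erase a).erase b := fun c hc => by
    obtain ⟨hcS, hbc⟩ := mem_filter.1 hc
    exact mem_erase.2 ⟨(G.ne_of_adj hbc).symm,
      mem_erase.2 ⟨by rintro rfl; exact hnadj hbc.symm, hcS⟩⟩
  have hsize : #((S.erase a).erase b) < G.degIn S a + G.degIn S b := by
    rw [card_erase_of_mem (mem_erase.2 ⟨hab.symm, hb⟩), card_erase_of_mem ha]
    have := one_lt_card.2 ⟨a, ha, b, hb, hab⟩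
    omega
  obtain ⟨c, hc⟩ := inter_nonempty_of_card_lt_card_add_card hA hB hsize
  simp only [mem_inter, mem_filter] at hc
  exact ⟨c, hc.1.1, hc.1.2, hc.2.2⟩

theorem induce_connected_of_card_le_two_mul_degIn_add_one {S : Finset V} (hS : S.Nonempty)
    (hdeg : ∀ v ∈ S, #S ≤ 2 * G.degIn S v + 1) : (G.induce (S : Set V)).Connected := by
  have : Nonempty (S : Set V) := hS.coe_sort
  refine ⟨fun ⟨a, ha⟩ ⟨b, hb⟩ => ?_⟩
  by_cases hab : a = b
  · subst hab; rfl
  by_cases hadj : G.Adj a b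
  · exact Adj.reachable (G := G.induce (S : Set V)) hadj
  obtain ⟨c, hc, hac, hbc⟩ := G.exists_common_neighbor_of_card_lt ha hb hab hadj
    (by have := hdeg a ha; have := hdeg b hb; omega)
  exact (Adj.reachable (G := G.induce (S : Set V)) (u := ⟨a, ha⟩) (v := ⟨c, hc⟩) hac).trans
    (Adj.reachable (G := G.induce (S : Set V)) (u := ⟨c, hc⟩) (v := ⟨b, hb⟩) hbc.symm)

variable {G} {Δ : ℕ}

theorem card_compl_mul_le_card (hreg : G.IsRegularOfDegree Δ) {S : Finset V}
    (hout : ∀ v ∈ S, G.degOut S v ≤ 1) : #Sᶜ * (Δ + 1 - #Sᶜ) ≤ #S := calc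
  #Sᶜ * (Δ + 1 - #Sᶜ) = ∑ _w ∈ Sᶜ, (Δ + 1 - #Sᶜ) := by rw [sum_const, smul_eq_mul]
  _ ≤ ∑ w ∈ Sᶜ, G.degIn S w := sum_le_sum fun w hw => by
    have := G.degOut_lt_card_compl (mem_compl.1 hw)
    have := (G.degIn_add_degOut S w).trans (hreg w)
    omega
  _ = ∑ v ∈ S, G.degOut S v := (G.sum_degOut_eq_sum_compl_degIn S).symm
  _ ≤ ∑ _v ∈ S, 1 := sum_le_sum hout
  _ = #S := (card_eq_sum_ones S).symm

theorem IsExactAlliance.card_compl_eq_one (hreg : G.IsRegularOfDegree Δ)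
    (hn : Fintype.card V < 2 * Δ) {S : Finset V} (h : G.IsExactAlliance S ((Δ : ℤ) - 2)) :
    #Sᶜ = 1 := by
  obtain ⟨-, hmin, v₀, hv₀, hv₀k⟩ := h
  have hsplit (v : V) : G.degIn S v + G.degOut S v = Δ := (G.degIn_add_degOut S v).trans (hreg v)
  have hout : ∀ v ∈ S, G.degOut S v ≤ 1 := fun v hv => by
    have := hmin v hv; have := hsplit v; omega
  have hv₀out : G.degOut S v₀ = 1 := by have := hsplit v₀; omega
  have ht_pos : 1 ≤ #Sᶜ := by
    have := G.degOut_le_card_compl S v₀; omega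
  have hΔ_le : Δ ≤ #S := by have := G.degIn_lt_card hv₀; have := hsplit v₀; omega
  have hcount := card_compl_mul_le_card hreg hout
  have hsum := S.card_add_card_compl
  obtain ⟨d, hd⟩ : ∃ d, Δ + 1 = #Sᶜ + d + 2 := ⟨Δ - 1 - #Sᶜ, by omega⟩
  rw [hd, show #Sᶜ + d + 2 - #Sᶜ = d + 2 by omega] at hcount
  -- `t (d + 2) ≤ n - t < 2 (t + d + 1)` gives `t (d + 1) < 2 (d + 1)`
  nlinarith

theorem isExactAlliance_compl_singleton (hreg : G.IsRegularOfDegree Δ)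
    (hn : Fintype.card V < 2 * Δ) (w : V) : G.IsExactAlliance {w}ᶜ ((Δ : ℤ) - 2) := by
  have hsplit (v : V) : G.degIn {w}ᶜ v + G.degOut {w}ᶜ v = Δ :=
    (G.degIn_add_degOut {w}ᶜ v).trans (hreg v)
  have hout (v : V) : G.degOut {w}ᶜ v ≤ 1 := by simpa using G.degOut_le_card_compl {w}ᶜ v
  obtain ⟨u, hwu⟩ : ∃ u, G.Adj w u := by
    obtain ⟨u, hu⟩ := card_pos.1 (by rw [G.card_neighborFinset_eq_degree w, hreg w]; omega)
    exact ⟨u, (G.mem_neighborFinset w u).1 hu⟩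
  have hu : u ∈ ({w}ᶜ : Finset V) := by simpa using (G.ne_of_adj hwu).symm
  have hu_out : G.degOut {w}ᶜ u = 1 := by simp [degOut, filter_singleton, hwu.symm]
  have hcard : #({w}ᶜ : Finset V) = Fintype.card V - 1 := by simp [card_compl]
  refine ⟨G.induce_connected_of_card_le_two_mul_degIn_add_one ⟨u, hu⟩ fun v _ => ?_,
    fun v _ => ?_, u, hu, ?_⟩
  · have := hsplit v; have := hout v; omega
  · have := hsplit v; have := hout v; omega
  · have := hsplit u; omega

end SimpleGraph

/-- For a Δ-regular graph of order `n < 2Δ`, `A_{Δ-2}(G) = n`. -/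
theorem allianceCoeff_maxDeg_sub_two_eq_card
    {V : Type*} [Fintype V] [DecidableEq V]
    (G : SimpleGraph V) [DecidableRel G.Adj] (Δ : ℕ)
    (hreg : G.IsRegularOfDegree Δ) (hn : Fintype.card V < 2 * Δ) :
    G.allianceCoeff ((Δ : ℤ) - 2) = Fintype.card V := by
  have hset : {S : Finset V | G.IsExactAlliance S ((Δ : ℤ) - 2)} =
      Set.range fun w : V => ({w}ᶜ : Finset V) := by
    ext S
    refine ⟨fun h => ?_, ?_⟩
    · obtain ⟨w, hw⟩ := card_eq_one.1 (h.card_compl_eq_one hreg hn)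
      exact ⟨w, by simp only [← hw, compl_compl]⟩
    · rintro ⟨w, rfl⟩
      exact SimpleGraph.isExactAlliance_compl_singleton hreg hn w
  rw [SimpleGraph.allianceCoeff, hset,
    Set.ncard_range_of_injective (f := fun w : V => ({w}ᶜ : Finset V))
      (compl_injective.comp singleton_injective),
    Nat.card_eq_fintype_card]
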